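/- Let σ ⊆ ℝⁿ be a closed convex cone and V = span(σ) the linear span of σ. If a sequence x_j ∈ ℝⁿ can be written x_j = x_j' + x_j'' with x_j' ∈ σ, the Euclidean distance from x_j' to the relative boundary of σ tending to +∞, and x_j'' bounded, then for every q in the relative interior of the dual cone σ^∨ ∩ V (within V), ⟨q, x_j⟩ → +∞. -/

import Mathlib

/-!
If `q ∈ σ^∨ ∩ V` and `x ∈ σ` lies at distance `d` from the relative boundary of `σ`, then
`x - t q ∈ σ` for all `0 ≤ t < d / ‖q‖`, since a segment in `V` leaving `σ` crosses the relative
boundary; hence `⟪q, x⟫ ≥ ‖q‖ d`, and the bounded part `x''` moves `⟪q, x⟫` by at most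
`‖q‖ sup ‖x''‖`. It remains to see `q ≠ 0`. The relative boundary is nonempty, so `σ ≠ V`, and
separating a point of `V \ σ` from the closed cone `σ` gives `w ∈ σ^∨ ∩ V` that is not orthogonal
to `σ`. If `0` were in the relative interior of the cone `σ^∨ ∩ V`, then `-w` would lie in it as
well, forcing `w ⊥ σ`.
-/

open Filter

/-- The dual cone `σ^∨ = {v | ⟨v,u⟩ ≥ 0 for all u ∈ σ}`. -/
def dualCone (n : ℕ) (σ : Set (EuclideanSpace ℝ (Fin n))) : Set (EuclideanSpace ℝ (Fin n)) :=
  {v : EuclideanSpace ℝ (Fin n) | ∀ u ∈ σ, (0 : ℝ) ≤ inner ℝ v u}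

open Metric Topology

theorem IsPreconnected.inter_frontier_nonempty {X : Type*} [TopologicalSpace X] {S t : Set X}
    (hS : IsPreconnected S) (hSt : (S ∩ t).Nonempty) (hSt' : (S \ t).Nonempty) :
    (S ∩ frontier t).Nonempty := by
  by_contra h
  have hcover : S ⊆ interior t ∪ (closure t)ᶜ := fun x hxS =>
    or_iff_not_imp_right.2 fun hx => not_not.1 fun hi => h ⟨x, hxS, not_not.1 hx, hi⟩
  obtain ⟨a, haS, hat⟩ := hSt
  obtain ⟨b, hbS, hbt⟩ := hSt'
  have ha : a ∈ interior t := (hcover haS).resolve_right (not_not.2 (subset_closure hat))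
  have hb : b ∈ (closure t)ᶜ := (hcover hbS).resolve_left fun hb => hbt (interior_subset hb)
  obtain ⟨x, -, hxi, hxc⟩ :=
    hS _ _ isOpen_interior isClosed_closure.isOpen_compl hcover ⟨a, haS, ha⟩ ⟨b, hbS, hb⟩
  exact hxc (interior_subset_closure hxi)

section NormedSpace

variable {E : Type*} [NormedAddCommGroup E] [NormedSpace ℝ E] {s : Set E}

theorem mem_of_dist_lt_infDist_intrinsicFrontier {x y : E} (hx : x ∈ s)
    (hy : y ∈ affineSpan ℝ s) (hxy : dist x y < infDist x (intrinsicFrontier ℝ s)) : y ∈ s := by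
  by_contra hys
  let f : ℝ → affineSpan ℝ s := fun r =>
    ⟨AffineMap.lineMap x y r, AffineMap.lineMap_mem r (subset_affineSpan ℝ s hx) hy⟩
  have hf : Continuous f := AffineMap.lineMap_continuous.subtype_mk _
  obtain ⟨_, ⟨r, hr, rfl⟩, hfr⟩ :=
    ((isPreconnected_Icc (a := (0 : ℝ)) (b := 1)).image f hf.continuousOn).inter_frontier_nonempty
      (t := (↑) ⁻¹' s)
      ⟨f 0, ⟨0, by simp, rfl⟩, by simpa [f] using hx⟩
      ⟨f 1, ⟨1, by simp, rfl⟩, by simpa [f] using hys⟩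
  have hfar : infDist x (intrinsicFrontier ℝ s) ≤ dist x (f r) :=
    infDist_le_dist_of_mem ⟨f r, hfr, rfl⟩
  have hnear : dist x (f r) ≤ dist x y := by
    change dist x (AffineMap.lineMap x y r) ≤ _
    rw [dist_left_lineMap, Real.norm_of_nonneg hr.1]
    exact mul_le_of_le_one_left dist_nonneg hr.2
  linarith

theorem exists_mem_affineSpan_notMem_of_intrinsicFrontier_nonempty
    (h : (intrinsicFrontier ℝ s).Nonempty) : ∃ z ∈ affineSpan ℝ s, z ∉ s := by
  by_contra! hspan
  have huniv : ((↑) ⁻¹' s : Set (affineSpan ℝ s)) = Set.univ :=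
    Set.eq_univ_of_forall fun z => hspan z z.2
  simp [intrinsicFrontier, huniv] at h

theorem coe_affineSpan_eq_span_of_zero_mem (h0 : (0 : E) ∈ s) :
    (affineSpan ℝ s : Set E) = Submodule.span ℝ s := by
  rw [← affineSpan_insert_zero, Set.insert_eq_of_mem h0]

theorem neg_mem_of_zero_mem_intrinsicInterior (hsmul : ∀ c : ℝ, 0 ≤ c → ∀ x ∈ s, c • x ∈ s)
    (h0 : 0 ∈ intrinsicInterior ℝ s) {w : E} (hw : w ∈ s) : -w ∈ s := by
  have hspan : ∀ c : ℝ, -(c • w) ∈ affineSpan ℝ s := fun c => by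
    rw [← SetLike.mem_coe, coe_affineSpan_eq_span_of_zero_mem (intrinsicInterior_subset h0)]
    exact neg_mem (Submodule.smul_mem _ c (Submodule.subset_span hw))
  obtain ⟨o, ho, ho0⟩ := h0
  let g : ℝ → affineSpan ℝ s := fun c => ⟨-(c • w), hspan c⟩
  have hg : Continuous g := (continuous_id.smul continuous_const).neg.subtype_mk _
  have hgo : g 0 = o := Subtype.ext (by simp [g, ho0])
  have hev : ∀ᶠ c in 𝓝[>] (0 : ℝ), g c ∈ (↑) ⁻¹' s :=
    nhdsWithin_le_nhds ((hg.tendsto 0).eventually (hgo ▸ mem_interior_iff_mem_nhds.1 ho))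
  obtain ⟨c, hc, hcpos⟩ := (hev.and self_mem_nhdsWithin).exists
  have := hsmul c⁻¹ (inv_nonneg.2 hcpos.le) _ hc
  rwa [smul_neg, inv_smul_smul₀ hcpos.ne'] at this

end NormedSpace

section EuclideanSpace

variable {n : ℕ} {σ : Set (EuclideanSpace ℝ (Fin n))}

theorem norm_mul_infDist_intrinsicFrontier_le_inner (h0 : 0 ∈ σ) {q x : EuclideanSpace ℝ (Fin n)}
    (hq : q ∈ dualCone n σ) (hqσ : q ∈ Submodule.span ℝ σ) (hx : x ∈ σ) :
    ‖q‖ * infDist x (intrinsicFrontier ℝ σ) ≤ inner ℝ q x := by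
  refine le_of_forall_lt_imp_le_of_dense fun a ha => ?_
  rcases lt_or_ge a 0 with ha0 | ha0
  · exact ha0.le.trans (hq x hx)
  have hq0 : 0 < ‖q‖ := pos_of_mul_pos_left (ha0.trans_lt ha) infDist_nonneg
  have hmem : x - (a / ‖q‖ ^ 2) • q ∈ σ := by
    refine mem_of_dist_lt_infDist_intrinsicFrontier hx ?_ ?_
    · rw [← SetLike.mem_coe, coe_affineSpan_eq_span_of_zero_mem h0]
      exact sub_mem (Submodule.subset_span hx) (Submodule.smul_mem _ _ hqσ)
    · calc dist x (x - (a / ‖q‖ ^ 2) • q) = a / ‖q‖ := by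
            rw [dist_self_sub_right, norm_smul, Real.norm_of_nonneg (by positivity)]
            field_simp
        _ < _ := by rwa [div_lt_iff₀' hq0]
  have := hq _ hmem
  rw [inner_sub_right, real_inner_smul_right, real_inner_self_eq_norm_sq,
    div_mul_cancel₀ a (pow_pos hq0 2).ne'] at this
  linarith

theorem exists_mem_dualCone_inter_inner_neg (hclosed : IsClosed σ) (h0 : 0 ∈ σ)
    (hadd : ∀ x ∈ σ, ∀ y ∈ σ, x + y ∈ σ) (hsmul : ∀ (c : ℝ), 0 ≤ c → ∀ x ∈ σ, c • x ∈ σ)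
    {V : Submodule ℝ (EuclideanSpace ℝ (Fin n))} (hσV : σ ⊆ V) {z : EuclideanSpace ℝ (Fin n)}
    (hzV : z ∈ V) (hzσ : z ∉ σ) : ∃ w ∈ dualCone n σ ∩ V, inner ℝ w z < 0 := by
  let C : ProperCone ℝ (EuclideanSpace ℝ (Fin n)) :=
    ⟨{ carrier := σ
       add_mem' := fun hx hy => hadd _ hx _ hy
       zero_mem' := h0
       smul_mem' := fun c x hx => hsmul c c.2 x hx }, hclosed⟩
  obtain ⟨y, hyσ, hyz⟩ := C.hyperplane_separation' (x₀ := z) hzσ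
  have hproj : ∀ u ∈ V, inner ℝ (V.starProjection y) u = inner ℝ u y := fun u hu => by
    rw [Submodule.inner_starProjection_left_eq_right, Submodule.starProjection_eq_self_iff.2 hu,
      real_inner_comm]
  exact ⟨V.starProjection y,
    ⟨fun u hu => (hproj u (hσV hu)).symm ▸ hyσ u hu, V.starProjection_apply_mem y⟩,
    (hproj z hzV).symm ▸ hyz⟩

theorem zero_notMem_intrinsicInterior_dualCone_inter (V : Submodule ℝ (EuclideanSpace ℝ (Fin n)))
    {w z : EuclideanSpace ℝ (Fin n)} (hw : w ∈ dualCone n σ ∩ V) (hz : z ∈ Submodule.span ℝ σ)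
    (hwz : inner ℝ w z < 0) : 0 ∉ intrinsicInterior ℝ (dualCone n σ ∩ V) := by
  intro h0
  have hcone : ∀ c : ℝ, 0 ≤ c → ∀ v ∈ dualCone n σ ∩ V, c • v ∈ dualCone n σ ∩ V :=
    fun c hc v hv => ⟨fun u hu => by rw [real_inner_smul_left]; exact mul_nonneg hc (hv.1 u hu),
      V.smul_mem c hv.2⟩
  have hnw := (neg_mem_of_zero_mem_intrinsicInterior hcone h0 hw).1
  have hperp : Submodule.span ℝ σ ≤ LinearMap.ker (innerₛₗ ℝ w) :=
    Submodule.span_le.2 fun u hu =>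
      le_antisymm (by simpa [inner_neg_left] using hnw u hu) (hw.1 u hu)
  exact hwz.ne (hperp hz)

end EuclideanSpace

theorem inner_tendsto_atTop_of_deep_in_cone_general (n : ℕ) (σ : Set (EuclideanSpace ℝ (Fin n)))
    (hclosed : IsClosed σ)
    (hadd : ∀ x ∈ σ, ∀ y ∈ σ, x + y ∈ σ)
    (hsmul : ∀ (c : ℝ), 0 ≤ c → ∀ x ∈ σ, c • x ∈ σ)
    (V : Submodule ℝ (EuclideanSpace ℝ (Fin n))) (hV : V = Submodule.span ℝ σ)
    (x' x'' : ℕ → EuclideanSpace ℝ (Fin n))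
    (hx' : ∀ j, x' j ∈ σ)
    (hdist : Tendsto (fun j => Metric.infDist (x' j) (intrinsicFrontier ℝ σ)) atTop atTop)
    (hx'' : Bornology.IsBounded (Set.range x''))
    (q : EuclideanSpace ℝ (Fin n))
    (hq : q ∈ intrinsicInterior ℝ (dualCone n σ ∩ (V : Set (EuclideanSpace ℝ (Fin n))))) :
    Tendsto (fun j => (inner ℝ q (x' j + x'' j) : ℝ)) atTop atTop := by
  subst hV
  have h0 : 0 ∈ σ := by simpa using hsmul 0 le_rfl _ (hx' 0)
  have hfrontier : (intrinsicFrontier ℝ σ).Nonempty := by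
    obtain ⟨j, hj⟩ := (hdist.eventually_gt_atTop 0).exists
    exact Set.nonempty_iff_ne_empty.2 fun h => by simp [h] at hj
  obtain ⟨z, hzspan, hzσ⟩ := exists_mem_affineSpan_notMem_of_intrinsicFrontier_nonempty hfrontier
  rw [← SetLike.mem_coe, coe_affineSpan_eq_span_of_zero_mem h0, SetLike.mem_coe] at hzspan
  obtain ⟨w, hw, hwz⟩ :=
    exists_mem_dualCone_inter_inner_neg hclosed h0 hadd hsmul Submodule.subset_span hzspan hzσ
  have hq0 : q ≠ 0 := by
    rintro rfl
    exact zero_notMem_intrinsicInterior_dualCone_inter _ hw hzspan hwz hq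
  obtain ⟨hq_dual, hq_span⟩ := intrinsicInterior_subset hq
  obtain ⟨M, hM⟩ := isBounded_iff_forall_norm_le.1 hx''
  simp_rw [inner_add_right]
  refine tendsto_atTop_add_right_of_le _ (-(‖q‖ * M)) ?_ fun j => ?_
  · exact tendsto_atTop_mono
      (fun j => norm_mul_infDist_intrinsicFrontier_le_inner h0 hq_dual hq_span (hx' j))
      (hdist.const_mul_atTop (norm_pos_iff.2 hq0))
  · calc -(‖q‖ * M) ≤ -(‖q‖ * ‖x'' j‖) :=
          neg_le_neg (mul_le_mul_of_nonneg_left (hM _ ⟨j, rfl⟩) (norm_nonneg q))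
      _ ≤ inner ℝ q (x'' j) := neg_le_of_abs_le (abs_real_inner_le_norm q (x'' j))

theorem inner_tendsto_atTop_of_deep_in_cone (n : ℕ) (σ : Set (EuclideanSpace ℝ (Fin n)))
    (hclosed : IsClosed σ) (hconv : Convex ℝ σ)
    (hadd : ∀ x ∈ σ, ∀ y ∈ σ, x + y ∈ σ)
    (hsmul : ∀ (c : ℝ), 0 ≤ c → ∀ x ∈ σ, c • x ∈ σ)
    (hσ : σ ≠ {0})
    (V : Submodule ℝ (EuclideanSpace ℝ (Fin n))) (hV : V = Submodule.span ℝ σ)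
    (x' x'' : ℕ → EuclideanSpace ℝ (Fin n))
    (hx' : ∀ j, x' j ∈ σ)
    (hdist : Tendsto (fun j => Metric.infDist (x' j) (intrinsicFrontier ℝ σ)) atTop atTop)
    (hx'' : Bornology.IsBounded (Set.range x''))
    (q : EuclideanSpace ℝ (Fin n))
    (hq : q ∈ intrinsicInterior ℝ (dualCone n σ ∩ (V : Set (EuclideanSpace ℝ (Fin n))))) :
    Tendsto (fun j => (inner ℝ q (x' j + x'' j) : ℝ)) atTop atTop :=
  inner_tendsto_atTop_of_deep_in_cone_general n σ hclosed hadd hsmul V hV x' x'' hx' hdist hx'' q hq
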